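/- arXiv:1809.05309 — 4 statements merged into one kernel-verified Lean document; each statement's English description precedes it below -/
import Mathlib

section
/- If the alt-relation is trivial, then the reflexive transitive closures T* and U* of the noise-free and noisy one-step transition relations are equal, and hence a plan is correct in the noise-free sense (for every initially accessible situation s there is s' with T*(Q0,s,QF,s') and φ s') iff it is correct in the noisy sense (same with U*). -/
def TStep {S A O Q : Type} (doAct : A → S → S) (Poss : A → S → Prop)
    (SF : A → S → O) (γ : Q → A) (δ : Q → O → Q)
    (c c' : Q × S) : Prop :=
  ∃ a o, γ c.1 = a ∧ Poss a c.2 ∧ SF a c.2 = o ∧ δ c.1 o = c'.1 ∧ c'.2 = doAct a c.2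

def UStep {S A O Z Q : Type} (doAct : A → S → S) (Poss : A → S → Prop)
    (SF : A → S → O) (alt : A → A → Z → Prop) (γ : Q → A) (δ : Q → O → Q)
    (c c' : Q × S) : Prop :=
  ∃ a b z o, γ c.1 = a ∧ alt a b z ∧ Poss b c.2 ∧ SF b c.2 = o ∧ δ c.1 o = c'.1 ∧
    c'.2 = doAct b c.2

theorem trivial_alt_closures_eq_and_correctness_iff {S A O Z Q : Type} [Nonempty Z]
    (doAct : A → S → S) (Poss : A → S → Prop) (SF : A → S → O)
    (alt : A → A → Z → Prop) (γ : Q → A) (δ : Q → O → Q)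
    (Q0 QF : Q) (K : S → S → Prop) (S0 : S) (φ : S → Prop)
    (htriv : ∀ a b z, alt a b z ↔ a = b) :
    (Relation.ReflTransGen (TStep doAct Poss SF γ δ)
        = Relation.ReflTransGen (UStep doAct Poss SF alt γ δ)) ∧
    ((∀ s, K s S0 → ∃ s', Relation.ReflTransGen (TStep doAct Poss SF γ δ) (Q0, s) (QF, s') ∧ φ s')
      ↔ (∀ s, K s S0 → ∃ s', Relation.ReflTransGen (UStep doAct Poss SF alt γ δ) (Q0, s) (QF, s') ∧ φ s')) := by
  have hst : TStep doAct Poss SF γ δ = UStep doAct Poss SF alt γ δ := by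
    funext c c'
    simp only [TStep, UStep, eq_iff_iff]
    constructor
    · rintro ⟨a, o, h1, h2, h3, h4, h5⟩
      obtain ⟨z⟩ := ‹Nonempty Z›
      exact ⟨a, a, z, o, h1, (htriv a a z).mpr rfl, h2, h3, h4, h5⟩
    · rintro ⟨a, b, z, o, h1, halt, h2, h3, h4, h5⟩
      obtain rfl := (htriv a b z).mp halt
      exact ⟨a, o, h1, h2, h3, h4, h5⟩
  rw [hst]
  exact ⟨rfl, Iff.rfl⟩
end

section
/- In a noise-free setting where the accessibility relation K is an equivalence relation preserved by the dynamics (if K(t,s), the advised action is executable at t whenever executable at s, and sensing outcomes agree on K-related situations after the same action sequence from the designated path), epistemic correctness implies correctness: if from every K-accessible s the belief-state execution V* reaches the final control state with the goal holding at all K-accessible situations of the final belief state, then from every K-accessible s there is an s' with T*(Q0,s,QF,s') and φ(s'). -/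
/-- Belief-level one-step transition V: the advised action must be executable at
all K-accessible situations. -/
def VStep {S A O Q : Type} (doAct : A → S → S) (Poss : A → S → Prop)
    (SF : A → S → O) (K : S → S → Prop) (γ : Q → A) (δ : Q → O → Q)
    (c c' : Q × S) : Prop :=
  ∃ a o, γ c.1 = a ∧ (∀ t, K t c.2 → Poss a t) ∧ SF a c.2 = o ∧ δ c.1 o = c'.1 ∧
    c'.2 = doAct a c.2

section NoiseFree

variable {S A O Q : Type} {doAct : A → S → S} {Poss : A → S → Prop} {SF : A → S → O}
  {K : S → S → Prop} {γ : Q → A} {δ : Q → O → Q}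

theorem VStep.tStep (hK : ∀ s, K s s) {c c' : Q × S}
    (h : VStep doAct Poss SF K γ δ c c') : TStep doAct Poss SF γ δ c c' := by
  obtain ⟨a, o, hγ, hPoss, hSF, hδ, hdo⟩ := h
  exact ⟨a, o, hγ, hPoss c.2 (hK c.2), hSF, hδ, hdo⟩

theorem VStep.reflTransGen_tStep (hK : ∀ s, K s s) {c c' : Q × S}
    (h : Relation.ReflTransGen (VStep doAct Poss SF K γ δ) c c') :
    Relation.ReflTransGen (TStep doAct Poss SF γ δ) c c' :=
  Relation.ReflTransGen.mono (fun _ _ => VStep.tStep hK) _ _ h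

end NoiseFree

theorem epistemic_correct_implies_correct_general {S A O Q : Type}
    (doAct : A → S → S) (Poss : A → S → Prop) (SF : A → S → O)
    (K : S → S → Prop) (γ : Q → A) (δ : Q → O → Q)
    (Q0 QF : Q) (S0 : S) (φ : S → Prop)
    (hequiv : Equivalence K)
    (hepi : ∀ s, K s S0 → ∃ s',
      Relation.ReflTransGen (VStep doAct Poss SF K γ δ) (Q0, s) (QF, s') ∧
      (∀ t, K t s' → φ t)) :
    ∀ s, K s S0 → ∃ s',
      Relation.ReflTransGen (TStep doAct Poss SF γ δ) (Q0, s) (QF, s') ∧ φ s' := by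
  intro s hs
  obtain ⟨s', hV, hφ⟩ := hepi s hs
  exact ⟨s', VStep.reflTransGen_tStep hequiv.refl hV, hφ s' (hequiv.refl s')⟩

/-- Theorem 2: in a noise-free setting, epistemic correctness implies correctness. -/
theorem epistemic_correct_implies_correct {S A O Q : Type}
    (doAct : A → S → S) (Poss : A → S → Prop) (SF : A → S → O)
    (K : S → S → Prop) (γ : Q → A) (δ : Q → O → Q)
    (Q0 QF : Q) (S0 : S) (φ : S → Prop)
    (hequiv : Equivalence K)
    (hpres : ∀ t s (q q' : Q) a, K t s →
      TStep doAct Poss SF γ δ (q, s) (q', doAct a s) →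
      TStep doAct Poss SF γ δ (q, t) (q', doAct a t) ∧ K (doAct a t) (doAct a s))
    (hepi : ∀ s, K s S0 → ∃ s',
      Relation.ReflTransGen (VStep doAct Poss SF K γ δ) (Q0, s) (QF, s') ∧
      (∀ t, K t s' → φ t)) :
    ∀ s, K s S0 → ∃ s',
      Relation.ReflTransGen (TStep doAct Poss SF γ δ) (Q0, s) (QF, s') ∧ φ s' :=
  epistemic_correct_implies_correct_general doAct Poss SF K γ δ Q0 QF S0 φ hequiv hepi
end

section
/- There exists a plan, action theory, and goal such that the plan is epistemically correct for the goal (the belief-level execution V* from the single initial situation reaches the final state with the goal believed), but the plan does not satisfy the termination condition with respect to U*: some U*-reachable configuration cannot reach the final control state. Concretely: with actions {pickup, noop, chop}, a noisy pickup whose alt-alternatives are {pickup, noop}, both yielding sensing result nil, a chop whose sensing result is 'down' after a successful pickup and 'up' after noop, and the 4-state controller that does pickup, then chop, terminating only on 'down' and otherwise looping at a non-final state with no outgoing goal path, the V*-execution along the pickup branch terminates with the goal, while the U*-execution along the noop branch reaches a configuration from which QF is unreachable. -/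
namespace Stmt7

inductive Act where | pickup | noop | chop
  deriving DecidableEq

inductive Obs where | nil | up | down
  deriving DecidableEq

inductive Ctl where | q1 | q2 | q3 | q4
  deriving DecidableEq

/-- Situations are action histories (most recent action first). -/
abbrev Sit := List Act

def doAct (a : Act) (s : Sit) : Sit := a :: s

def Poss (_ : Act) (_ : Sit) : Prop := True

/-- Sensing: pickup and noop return nil; chop returns `down` iff a pickup has
occurred (the chop succeeded on the held saw), otherwise `up`. -/
def SF (a : Act) (s : Sit) : Obs :=
  match a with
  | Act.pickup => Obs.nil
  | Act.noop => Obs.nil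
  | Act.chop => if Act.pickup ∈ s then Obs.down else Obs.up

/-- The alt-alternatives: a noisy pickup may actually be a noop. -/
def alt (a b : Act) (_ : Unit) : Prop :=
  match a with
  | Act.pickup => b = Act.pickup ∨ b = Act.noop
  | Act.noop => b = Act.noop
  | Act.chop => b = Act.chop

/-- Controller: q1 advises pickup, q2 and q3 advise chop, q4 is final. -/
def γ : Ctl → Act
  | Ctl.q1 => Act.pickup
  | Ctl.q2 => Act.chop
  | Ctl.q3 => Act.chop
  | Ctl.q4 => Act.chop

def δ : Ctl → Obs → Ctl
  | Ctl.q1, _ => Ctl.q2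
  | Ctl.q2, Obs.down => Ctl.q4
  | Ctl.q2, _ => Ctl.q3
  | Ctl.q3, _ => Ctl.q3
  | Ctl.q4, _ => Ctl.q4

/-- Thickness: the unit-thickness tree is down iff a chop happened with the saw in hand. -/
def d (s : Sit) : ℕ := if Act.chop ∈ s ∧ Act.pickup ∈ s then 0 else 1

def goal (s : Sit) : Prop := d s = 0

/-- Noisy one-step transition (U rule). -/
def UStep (c c' : Ctl × Sit) : Prop :=
  ∃ a b z o, γ c.1 = a ∧ alt a b z ∧ Poss b c.2 ∧ SF b c.2 = o ∧ δ c.1 o = c'.1 ∧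
    c'.2 = doAct b c.2

/-- Belief-level one-step transition (V rule): uses the advised action itself.
There is a single initial world, so the belief state is the singleton of the
designated situation and K is equality. -/
def VStep (c c' : Ctl × Sit) : Prop :=
  ∃ a o, γ c.1 = a ∧ Poss a c.2 ∧ SF a c.2 = o ∧ δ c.1 o = c'.1 ∧ c'.2 = doAct a c.2

/-- Theorem 3: the controller is epistemically correct for the goal, yet the
termination condition (eq. 7) with respect to U* fails. -/
theorem epistemically_correct_but_not_terminating :
    (∃ s', Relation.ReflTransGen VStep (Ctl.q1, ([] : Sit)) (Ctl.q4, s') ∧ goal s') ∧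
    ¬ (∀ (q : Ctl) (s' : Sit), Relation.ReflTransGen UStep (Ctl.q1, ([] : Sit)) (q, s') →
        ∃ s'', Relation.ReflTransGen UStep (q, s') (Ctl.q4, s'')) := by
  constructor
  · refine ⟨[Act.chop, Act.pickup], ?_, ?_⟩
    · have h1 : VStep (Ctl.q1, ([] : Sit)) (Ctl.q2, [Act.pickup]) :=
        ⟨Act.pickup, Obs.nil, rfl, trivial, rfl, rfl, rfl⟩
      have h2 : VStep (Ctl.q2, [Act.pickup]) (Ctl.q4, [Act.chop, Act.pickup]) :=
        ⟨Act.chop, Obs.down, rfl, trivial, rfl, rfl, rfl⟩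
      exact Relation.ReflTransGen.head h1 (Relation.ReflTransGen.single h2)
    · simp [goal, d]
  · intro h
    have h1 : UStep (Ctl.q1, ([] : Sit)) (Ctl.q2, [Act.noop]) :=
      ⟨Act.pickup, Act.noop, (), Obs.nil, rfl, Or.inr rfl, trivial, rfl, rfl, rfl⟩
    have h2 : UStep (Ctl.q2, [Act.noop]) (Ctl.q3, [Act.chop, Act.noop]) :=
      ⟨Act.chop, Act.chop, (), Obs.up, rfl, rfl, trivial, rfl, rfl, rfl⟩
    have hreach : Relation.ReflTransGen UStep (Ctl.q1, ([] : Sit))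
        (Ctl.q3, [Act.chop, Act.noop]) :=
      Relation.ReflTransGen.head h1 (Relation.ReflTransGen.single h2)
    obtain ⟨s'', hs''⟩ := h Ctl.q3 [Act.chop, Act.noop] hreach
    -- any U*-reachable state from q3 has control q3
    have stay : ∀ c c', Relation.ReflTransGen UStep c c' → c.1 = Ctl.q3 → c'.1 = Ctl.q3 := by
      intro c c' hcc
      induction hcc with
      | refl => exact id
      | tail _ hstep ih =>
          intro hc
          obtain ⟨a, b, z, o, _, _, _, _, hδ, _⟩ := hstep
          rw [ih hc] at hδ
          exact hδ.symm
    exact absurd (stay _ _ hs'' rfl) (by simp)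

end Stmt7
end

section
/- In the noisy tree-chop domain above, the termination property holds for the Figure-1 controller from any initial s with d(s) ≥ 1: for every configuration (q,s') with U*(Q0,s,q,s'), there exists s'' with U*(q,s',QF,s''). -/
namespace Stmt10

inductive Act where | chop | chop_succeed | chop_fail | getd
  deriving DecidableEq

inductive Obs where | nil | up | down
  deriving DecidableEq

inductive Ctl where | Q0 | Q | QF
  deriving DecidableEq

def γ : Ctl → Act
  | Ctl.Q0 => Act.chop
  | Ctl.Q => Act.getd
  | Ctl.QF => Act.getd

def δ : Ctl → Obs → Ctl
  | Ctl.Q0, _ => Ctl.Q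
  | Ctl.Q, Obs.up => Ctl.Q0
  | Ctl.Q, Obs.down => Ctl.QF
  | Ctl.Q, Obs.nil => Ctl.Q
  | Ctl.QF, _ => Ctl.QF

/-- alt-alternatives: the noisy chop either succeeds or fails; getd is exact. -/
def alt (a b : Act) : Prop :=
  match a with
  | Act.chop => b = Act.chop_succeed ∨ b = Act.chop_fail
  | Act.chop_succeed => b = Act.chop_succeed
  | Act.chop_fail => b = Act.chop_fail
  | Act.getd => b = Act.getd

section

variable {S : Type} (doAct : Act → S → S) (d : S → ℕ)

def Poss (a : Act) (s : S) : Prop :=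
  match a with
  | Act.chop_succeed => 1 ≤ d s
  | _ => True

def SF (a : Act) (s : S) : Obs :=
  match a with
  | Act.getd => if d s = 0 then Obs.down else Obs.up
  | _ => Obs.nil

/-- Noisy one-step transition U. -/
def UStep (c c' : Ctl × S) : Prop :=
  ∃ a b o, γ c.1 = a ∧ alt a b ∧ Poss d b c.2 ∧ SF d b c.2 = o ∧ δ c.1 o = c'.1 ∧
    c'.2 = doAct b c.2


lemma stepQ0 (s : S) : UStep doAct d (Ctl.Q0, s) (Ctl.Q, doAct Act.chop_fail s) :=
  ⟨Act.chop, Act.chop_fail, Obs.nil, rfl, Or.inr rfl, trivial, rfl, rfl, rfl⟩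

lemma stepQ0_succ (s : S) (h : 1 ≤ d s) :
    UStep doAct d (Ctl.Q0, s) (Ctl.Q, doAct Act.chop_succeed s) :=
  ⟨Act.chop, Act.chop_succeed, Obs.nil, rfl, Or.inl rfl, h, rfl, rfl, rfl⟩

lemma stepQ_down (s : S) (h : d s = 0) :
    UStep doAct d (Ctl.Q, s) (Ctl.QF, doAct Act.getd s) :=
  ⟨Act.getd, Act.getd, Obs.down, rfl, rfl, trivial, by simp [SF, h], rfl, rfl⟩

lemma stepQ_up (s : S) (h : d s ≠ 0) :
    UStep doAct d (Ctl.Q, s) (Ctl.Q0, doAct Act.getd s) :=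
  ⟨Act.getd, Act.getd, Obs.up, rfl, rfl, trivial, by simp [SF, h], rfl, rfl⟩

lemma reachQF
    (hsucc : ∀ s, 1 ≤ d s → d (doAct Act.chop_succeed s) = d s - 1)
    (hgetd : ∀ s, d (doAct Act.getd s) = d s) :
    ∀ n s, d s ≤ n → ∃ s'', Relation.ReflTransGen (UStep doAct d) (Ctl.Q, s) (Ctl.QF, s'') := by
  intro n
  induction n with
  | zero =>
    intro s hs
    exact ⟨doAct Act.getd s, Relation.ReflTransGen.single
      (stepQ_down doAct d s (Nat.le_zero.mp hs))⟩
  | succ n ih =>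
    intro s hs
    by_cases h0 : d s = 0
    · exact ⟨doAct Act.getd s, Relation.ReflTransGen.single (stepQ_down doAct d s h0)⟩
    · set s1 := doAct Act.getd s with hs1
      have hd1 : d s1 = d s := hgetd s
      have hpos : 1 ≤ d s1 := by omega
      set s2 := doAct Act.chop_succeed s1 with hs2
      have hd2 : d s2 = d s1 - 1 := hsucc s1 hpos
      obtain ⟨s'', h''⟩ := ih s2 (by omega)
      exact ⟨s'', Relation.ReflTransGen.head (stepQ_up doAct d s h0)
        (Relation.ReflTransGen.head (stepQ0_succ doAct d s1 hpos) h'')⟩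

/-- Termination of the Figure-1 controller in the noisy tree-chop domain:
every U*-reachable configuration can reach the final control state. -/
theorem controller_terminates_noisy
    (hsucc : ∀ s, 1 ≤ d s → d (doAct Act.chop_succeed s) = d s - 1)
    (hfail : ∀ s, d (doAct Act.chop_fail s) = d s)
    (hgetd : ∀ s, d (doAct Act.getd s) = d s) :
    ∀ s : S, 1 ≤ d s →
      ∀ (q : Ctl) (s' : S), Relation.ReflTransGen (UStep doAct d) (Ctl.Q0, s) (q, s') →
        ∃ s'', Relation.ReflTransGen (UStep doAct d) (q, s') (Ctl.QF, s'') := by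
  intro s _ q s' _
  cases q with
  | QF => exact ⟨s', Relation.ReflTransGen.refl⟩
  | Q => exact reachQF doAct d hsucc hgetd (d s') s' le_rfl
  | Q0 =>
    obtain ⟨s'', h''⟩ := reachQF doAct d hsucc hgetd (d (doAct Act.chop_fail s'))
      (doAct Act.chop_fail s') le_rfl
    exact ⟨s'', Relation.ReflTransGen.head (stepQ0 doAct d s') h''⟩

end

end Stmt10
end
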